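/- arXiv:1511.07489 — 4 statements merged into one kernel-verified Lean document; each statement's English description precedes it below -/
import Mathlib

section
/- Let f(x) = x⁴ + px³ + qx² + rx + s be a monic real quartic with discriminant D. If 3p² - 8q > 0, D1 = p²q² - 3rp³ - 6p²s - 4q³ + 14pqr + 16sq - 18r² > 0, and D > 0, then f has four distinct real roots. -/
/-!
Substituting `x = y - p/4` turns `f` into the depressed quartic `y⁴ + P y² + Q y + R`, and the
hypotheses into `P < 0`, `-4P³ + 16PR - 18Q² > 0` and `disc(P, Q, R) > 0`. These force the
resolvent cubic `w³ + 2P w² + (P² - 4R) w - Q²` to have a root `w ∈ (0, -2P)`, and Ferrari's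
method with `a = √w` factors the depressed quartic as `(y² + a y + b)(y² - a y + c)`. Since
the discriminant of a product of two quadratics is the product of their discriminants times the
square of their resultant, `disc > 0` makes the two discriminants of the same sign and the
resultant nonzero; `w < -2P` makes their sum positive. So each factor has two real roots and
the factors share none.
-/

def HasFourDistinctZeros (f : ℝ → ℝ) : Prop :=
  ∃ a b c d : ℝ, a ≠ b ∧ a ≠ c ∧ a ≠ d ∧ b ≠ c ∧ b ≠ d ∧ c ≠ d ∧
    f a = 0 ∧ f b = 0 ∧ f c = 0 ∧ f d = 0

theorem HasFourDistinctZeros.comp_add {f : ℝ → ℝ} (hf : HasFourDistinctZeros f) (t : ℝ) :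
    HasFourDistinctZeros fun x ↦ f (x + t) := by
  obtain ⟨a, b, c, d, hab, hac, had, hbc, hbd, hcd, ha, hb, hc, hd⟩ := hf
  refine ⟨a - t, b - t, c - t, d - t, ?_, ?_, ?_, ?_, ?_, ?_, ?_, ?_, ?_, ?_⟩ <;>
    simp [*]

def depressedQuarticDisc {K : Type*} [CommRing K] (P Q R : K) : K :=
  256 * R ^ 3 - 128 * P ^ 2 * R ^ 2 + 144 * P * Q ^ 2 * R - 27 * Q ^ 4 + 16 * P ^ 4 * R
    - 4 * P ^ 3 * Q ^ 2

section Factorization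

variable {K : Type*} [CommRing K]

theorem depressedQuarticDisc_eq_mul (a b c : K) :
    depressedQuarticDisc (b + c - a ^ 2) (a * (c - b)) (b * c) =
      (a ^ 2 - 4 * b) * (a ^ 2 - 4 * c) * ((c - b) ^ 2 + 2 * a ^ 2 * (b + c)) ^ 2 := by
  unfold depressedQuarticDisc
  ring

theorem resultant_eq_zero_of_common_root {a₁ b₁ a₂ b₂ y : K}
    (h₁ : y ^ 2 + a₁ * y + b₁ = 0) (h₂ : y ^ 2 + a₂ * y + b₂ = 0) :
    (b₁ - b₂) ^ 2 - (a₁ - a₂) * (a₂ * b₁ - a₁ * b₂) = 0 := by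
  linear_combination ((a₁ - a₂) ^ 2 + ((a₁ - a₂) * y + a₂ * (a₁ - a₂) - (b₁ - b₂))) * h₂
    - ((a₁ - a₂) * y + a₂ * (a₁ - a₂) - (b₁ - b₂)) * h₁

end Factorization

theorem exists_ne_roots_quadratic {a b : ℝ} (h : 0 < a ^ 2 - 4 * b) :
    ∃ y₁ y₂ : ℝ, y₁ ≠ y₂ ∧ y₁ ^ 2 + a * y₁ + b = 0 ∧ y₂ ^ 2 + a * y₂ + b = 0 := by
  have he : √(a ^ 2 - 4 * b) ^ 2 = a ^ 2 - 4 * b := Real.sq_sqrt h.le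
  refine ⟨(-a + √(a ^ 2 - 4 * b)) / 2, (-a - √(a ^ 2 - 4 * b)) / 2, ?_, ?_, ?_⟩
  · intro h'
    linarith [Real.sqrt_pos.mpr h]
  · linear_combination he / 4
  · linear_combination he / 4

theorem hasFourDistinctZeros_mul_quadratic {a₁ b₁ a₂ b₂ : ℝ}
    (h₁ : 0 < a₁ ^ 2 - 4 * b₁) (h₂ : 0 < a₂ ^ 2 - 4 * b₂)
    (hres : (b₁ - b₂) ^ 2 - (a₁ - a₂) * (a₂ * b₁ - a₁ * b₂) ≠ 0) :
    HasFourDistinctZeros fun y ↦ (y ^ 2 + a₁ * y + b₁) * (y ^ 2 + a₂ * y + b₂) := by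
  obtain ⟨y₁, y₂, h12, hy₁, hy₂⟩ := exists_ne_roots_quadratic h₁
  obtain ⟨y₃, y₄, h34, hy₃, hy₄⟩ := exists_ne_roots_quadratic h₂
  have hne {y z : ℝ} (hy : y ^ 2 + a₁ * y + b₁ = 0) (hz : z ^ 2 + a₂ * z + b₂ = 0) : y ≠ z := by
    rintro rfl
    exact hres (resultant_eq_zero_of_common_root hy hz)
  refine ⟨y₁, y₂, y₃, y₄, h12, hne hy₁ hy₃, hne hy₁ hy₄, hne hy₂ hy₃, hne hy₂ hy₄, h34, ?_, ?_, ?_, ?_⟩ <;>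
    simp [*]

theorem exists_root_resolvent {P Q R : ℝ} (hP : P < 0)
    (hD₁ : 0 < -4 * P ^ 3 + 16 * P * R - 18 * Q ^ 2) (hD : 0 < depressedQuarticDisc P Q R) :
    ∃ w, 0 < w ∧ w < -2 * P ∧ w ^ 3 + 2 * P * w ^ 2 + (P ^ 2 - 4 * R) * w - Q ^ 2 = 0 := by
  obtain ⟨l, hl, hlP, hneg⟩ :
      ∃ l : ℝ, 0 ≤ l ∧ l < -2 * P ∧ l ^ 3 + 2 * P * l ^ 2 + (P ^ 2 - 4 * R) * l - Q ^ 2 < 0 := by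
    rcases eq_or_ne Q 0 with rfl | hQ
    · -- the resolvent vanishes at `0`; at `-P` it is `4PR`
      have hR : 0 < R := by
        have : depressedQuarticDisc P 0 R = 16 * R * (P ^ 2 - 4 * R) ^ 2 := by
          unfold depressedQuarticDisc; ring
        nlinarith [sq_nonneg (P ^ 2 - 4 * R)]
      exact ⟨-P, by linarith, by linarith, by nlinarith⟩
    · exact ⟨0, le_rfl, by linarith, by simpa using pow_pos (abs_pos.mpr hQ) 2⟩
  have hpos : 0 < (-2 * P) ^ 3 + 2 * P * (-2 * P) ^ 2 + (P ^ 2 - 4 * R) * (-2 * P) - Q ^ 2 := by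
    linarith [sq_nonneg Q]
  obtain ⟨w, ⟨hlw, hwP⟩, hw⟩ := intermediate_value_Ioo hlP.le
    (f := fun w ↦ w ^ 3 + 2 * P * w ^ 2 + (P ^ 2 - 4 * R) * w - Q ^ 2) (by fun_prop) ⟨hneg, hpos⟩
  exact ⟨w, hl.trans_lt hlw, hwP, hw⟩

theorem exists_ferrari_factors {P Q R w : ℝ} (hw : 0 < w)
    (hres : w ^ 3 + 2 * P * w ^ 2 + (P ^ 2 - 4 * R) * w - Q ^ 2 = 0) :
    ∃ a b c : ℝ, a ^ 2 = w ∧ b + c - a ^ 2 = P ∧ a * (c - b) = Q ∧ b * c = R := by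
  set a := √w
  have ha : 0 < a := Real.sqrt_pos.mpr hw
  have ha2 : a ^ 2 = w := Real.sq_sqrt hw.le
  refine ⟨a, (P + w - Q / a) / 2, (P + w + Q / a) / 2, ha2, by linarith, ?_, ?_⟩
  · field_simp
    ring
  · field_simp
    rw [← ha2] at hres ⊢
    linear_combination hres

theorem hasFourDistinctZeros_depressed_quartic {P Q R : ℝ} (hP : P < 0)
    (hD₁ : 0 < -4 * P ^ 3 + 16 * P * R - 18 * Q ^ 2) (hD : 0 < depressedQuarticDisc P Q R) :
    HasFourDistinctZeros fun y ↦ y ^ 4 + P * y ^ 2 + Q * y + R := by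
  obtain ⟨w, hw, hwP, hres⟩ := exists_root_resolvent hP hD₁ hD
  obtain ⟨a, b, c, rfl, rfl, rfl, rfl⟩ := exists_ferrari_factors hw hres
  rw [depressedQuarticDisc_eq_mul] at hD
  have hsum : 0 < (a ^ 2 - 4 * b) + (a ^ 2 - 4 * c) := by linarith
  have hresultant : (c - b) ^ 2 + 2 * a ^ 2 * (b + c) ≠ 0 := by
    intro h
    simp [h] at hD
  have hprod : 0 < (a ^ 2 - 4 * b) * (a ^ 2 - 4 * c) := pos_of_mul_pos_left hD (sq_nonneg _)
  have h₁ : 0 < a ^ 2 - 4 * b := by nlinarith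
  have h₂ : 0 < (-a) ^ 2 - 4 * c := by nlinarith
  have hfac : (fun y ↦ y ^ 4 + (b + c - a ^ 2) * y ^ 2 + a * (c - b) * y + b * c) =
      fun y ↦ (y ^ 2 + a * y + b) * (y ^ 2 + -a * y + c) :=
    funext fun y ↦ by ring
  rw [hfac]
  exact hasFourDistinctZeros_mul_quadratic h₁ h₂ (by convert hresultant using 1; ring)

theorem quartic_eq_depressed (p q r s x : ℝ) :
    x ^ 4 + p * x ^ 3 + q * x ^ 2 + r * x + s =
      (x + p / 4) ^ 4 + (q - 3 * p ^ 2 / 8) * (x + p / 4) ^ 2 +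
        (r - p * q / 2 + p ^ 3 / 8) * (x + p / 4) +
        (s - p * r / 4 + p ^ 2 * q / 16 - 3 * p ^ 4 / 256) := by
  ring

theorem quartic_D1_eq_depressed (p q r s : ℝ) :
    p^2*q^2 - 3*r*p^3 - 6*p^2*s - 4*q^3 + 14*p*q*r + 16*s*q - 18*r^2 =
      -4 * (q - 3 * p ^ 2 / 8) ^ 3 +
        16 * (q - 3 * p ^ 2 / 8) * (s - p * r / 4 + p ^ 2 * q / 16 - 3 * p ^ 4 / 256) -
        18 * (r - p * q / 2 + p ^ 3 / 8) ^ 2 := by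
  ring

theorem quartic_disc_eq_depressed (p q r s : ℝ) :
    18*p^3*r*q*s - 4*q^3*p^2*s + 144*s*r^2*q + q^2*p^2*r^2 - 192*p*r*s^2 + 144*q*p^2*s^2 + 18*p*r^3*q - 4*p^3*r^3 - 128*q^2*s^2 + 16*q^4*s - 4*q^3*r^2 - 27*p^4*s^2 - 80*p*r*q^2*s - 6*p^2*r^2*s + 256*s^3 - 27*r^4 =
      depressedQuarticDisc (q - 3 * p ^ 2 / 8) (r - p * q / 2 + p ^ 3 / 8)
        (s - p * r / 4 + p ^ 2 * q / 16 - 3 * p ^ 4 / 256) := by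
  unfold depressedQuarticDisc
  ring

theorem quartic_four_distinct_real_roots (p q r s : ℝ)
    (hpq : 3 * p ^ 2 - 8 * q > 0)
    (hD1 : (p^2*q^2 - 3*r*p^3 - 6*p^2*s - 4*q^3 + 14*p*q*r + 16*s*q - 18*r^2) > 0)
    (hD : (18*p^3*r*q*s - 4*q^3*p^2*s + 144*s*r^2*q + q^2*p^2*r^2 - 192*p*r*s^2 + 144*q*p^2*s^2 + 18*p*r^3*q - 4*p^3*r^3 - 128*q^2*s^2 + 16*q^4*s - 4*q^3*r^2 - 27*p^4*s^2 - 80*p*r*q^2*s - 6*p^2*r^2*s + 256*s^3 - 27*r^4) > 0) :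
    ∃ a b c d : ℝ, a ≠ b ∧ a ≠ c ∧ a ≠ d ∧ b ≠ c ∧ b ≠ d ∧ c ≠ d ∧
      a ^ 4 + p * a ^ 3 + q * a ^ 2 + r * a + s = 0 ∧
      b ^ 4 + p * b ^ 3 + q * b ^ 2 + r * b + s = 0 ∧
      c ^ 4 + p * c ^ 3 + q * c ^ 2 + r * c + s = 0 ∧
      d ^ 4 + p * d ^ 3 + q * d ^ 2 + r * d + s = 0 := by
  rw [quartic_D1_eq_depressed] at hD1
  rw [quartic_disc_eq_depressed] at hD
  have h := (hasFourDistinctZeros_depressed_quartic (by linarith) hD1 hD).comp_add (p / 4)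
  show HasFourDistinctZeros fun x ↦ x ^ 4 + p * x ^ 3 + q * x ^ 2 + r * x + s
  simpa only [quartic_eq_depressed] using h
end

section
/- Let f(x) = x⁴ + px³ + qx² + rx + s with discriminant D > 0. If 3p² - 8q ≤ 0 or D1 = p²q² - 3rp³ - 6p²s - 4q³ + 14pqr + 16sq - 18r² ≤ 0, then f has no real roots (four distinct complex roots). -/
/-!
If `f` had a real root `x`, splitting off `x` and a real root `y` of the cubic quotient writes
`f = (X - x)(X - y)(X² + uX + v)`, and then `D = (u² - 4v) · (…)²`; so `D > 0` makes the
quadratic factor split over `ℝ` as well and all four roots `xᵢ` are real and distinct. But then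
`3p² - 8q = ∑ (xᵢ - xⱼ)²` and `2 D1 = ∑ ((xᵢ - xⱼ)(xⱼ - xₖ)(xᵢ - xₖ))²` (over triples) are both
positive.

Without real roots, `f` is a product of two real quadratics `(X - z)(X - z̄)` and `(X - w)(X - w̄)`,
and `D` is the square of the Vandermonde product of `z, z̄, w, w̄`, so `D ≠ 0` makes them distinct.
-/

open Polynomial ComplexConjugate

section CommRing

variable {R : Type*} [CommRing R]

def quarticDisc (p q r s : R) : R :=
  18*p^3*r*q*s - 4*q^3*p^2*s + 144*s*r^2*q + q^2*p^2*r^2 - 192*p*r*s^2 + 144*q*p^2*s^2 +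
    18*p*r^3*q - 4*p^3*r^3 - 128*q^2*s^2 + 16*q^4*s - 4*q^3*r^2 - 27*p^4*s^2 - 80*p*r*q^2*s -
    6*p^2*r^2*s + 256*s^3 - 27*r^4

theorem quarticDisc_of_roots (a b c d : R) :
    quarticDisc (-(a + b + c + d)) (a*b + a*c + a*d + b*c + b*d + c*d)
        (-(a*b*c + a*b*d + a*c*d + b*c*d)) (a*b*c*d) =
      ((a - b) * (a - c) * (a - d) * (b - c) * (b - d) * (c - d)) ^ 2 := by
  unfold quarticDisc; ring

theorem quarticDisc_of_two_roots_mul_quadratic (a b u v : R) :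
    quarticDisc (u - (a + b)) (v + a*b - u*(a + b)) (u*(a*b) - v*(a + b)) (v*(a*b)) =
      (u^2 - 4*v) * ((a - b) * (a^2 + u*a + v) * (b^2 + u*b + v)) ^ 2 := by
  unfold quarticDisc; ring

theorem quartic_coeffs_eq_of_eq {p q r s p' q' r' s' : R}
    (h : (X^4 + C p * X^3 + C q * X^2 + C r * X + C s : R[X]) =
      X^4 + C p' * X^3 + C q' * X^2 + C r' * X + C s') :
    p = p' ∧ q = q' ∧ r = r' ∧ s = s' := by
  have hcoeff (k : ℕ) := congrArg (coeff · k) h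
  simp only [coeff_add, coeff_C_mul, coeff_X_pow, coeff_X, coeff_C] at hcoeff
  exact ⟨by simpa using hcoeff 3, by simpa using hcoeff 2, by simpa using hcoeff 1,
    by simpa using hcoeff 0⟩

theorem quartic_coeffs_of_eq_prod {p q r s a b c d : R}
    (h : X^4 + C p * X^3 + C q * X^2 + C r * X + C s =
      (X - C a) * (X - C b) * (X - C c) * (X - C d)) :
    p = -(a + b + c + d) ∧ q = a*b + a*c + a*d + b*c + b*d + c*d ∧
      r = -(a*b*c + a*b*d + a*c*d + b*c*d) ∧ s = a*b*c*d := by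
  refine quartic_coeffs_eq_of_eq (h.trans ?_)
  simp only [map_neg, map_add, map_mul]
  ring

theorem quarticDisc_eq_of_eq_prod {p q r s a b c d : R}
    (h : X^4 + C p * X^3 + C q * X^2 + C r * X + C s =
      (X - C a) * (X - C b) * (X - C c) * (X - C d)) :
    quarticDisc p q r s = ((a - b) * (a - c) * (a - d) * (b - c) * (b - d) * (c - d)) ^ 2 := by
  obtain ⟨rfl, rfl, rfl, rfl⟩ := quartic_coeffs_of_eq_prod h
  exact quarticDisc_of_roots a b c d

end CommRing

theorem cubic_nonneg_of_le {a b c x : ℝ} (hx : 1 + |a| + |b| + |c| ≤ x) :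
    0 ≤ x^3 + a*x^2 + b*x + c := by
  have hx1 : 1 ≤ x := by linarith [abs_nonneg a, abs_nonneg b, abs_nonneg c]
  have ha : -|a| * x^2 ≤ a * x^2 := by nlinarith [neg_abs_le a]
  have hb : -|b| * x^2 ≤ b * x := by
    nlinarith [neg_abs_le b, mul_nonneg (abs_nonneg b) (mul_nonneg (by linarith : 0 ≤ x)
      (by linarith : 0 ≤ x - 1))]
  have hc : -|c| * x^2 ≤ c := by
    nlinarith [neg_abs_le c, mul_nonneg (abs_nonneg c) (by nlinarith : 0 ≤ x^2 - 1)]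
  nlinarith

theorem exists_cubic_eq_zero (a b c : ℝ) : ∃ x : ℝ, x^3 + a*x^2 + b*x + c = 0 := by
  set M := 1 + |a| + |b| + |c|
  have hM : -M ≤ M := by linarith [abs_nonneg a, abs_nonneg b, abs_nonneg c]
  have hpos : 0 ≤ M^3 + a*M^2 + b*M + c := cubic_nonneg_of_le le_rfl
  have hneg : (-M)^3 + a*(-M)^2 + b*(-M) + c ≤ 0 := by
    have := cubic_nonneg_of_le (a := -a) (b := b) (c := -c) (x := M) (by simp [M, abs_neg])
    linarith
  obtain ⟨x, -, hx⟩ := intermediate_value_Icc hM (by fun_prop : Continuous fun x : ℝ =>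
    x^3 + a*x^2 + b*x + c).continuousOn ⟨hneg, hpos⟩
  exact ⟨x, hx⟩

theorem exists_roots_of_quadratic_discrim_nonneg {u v : ℝ} (h : 0 ≤ u^2 - 4*v) :
    ∃ a b : ℝ, u = -(a + b) ∧ v = a * b := by
  have hsq := Real.sq_sqrt h
  exact ⟨(-u + √(u^2 - 4*v)) / 2, (-u - √(u^2 - 4*v)) / 2, by ring,
    by linear_combination (1/4 : ℝ) * hsq⟩

theorem exists_quadratic_factor_of_quartic_eq_zero {p q r s x : ℝ}
    (hx : x^4 + p*x^3 + q*x^2 + r*x + s = 0) :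
    ∃ y u v : ℝ, p = u - (x + y) ∧ q = v + x*y - u*(x + y) ∧ r = u*(x*y) - v*(x + y) ∧
      s = v*(x*y) := by
  obtain ⟨y, hy⟩ := exists_cubic_eq_zero (p + x) (q + p*x + x^2) (r + q*x + p*x^2 + x^3)
  refine ⟨y, p + x + y, q + p*x + x^2 + (p + x)*y + y^2, by ring, by ring,
    by linear_combination hy, by linear_combination hx - x * hy⟩

theorem exists_four_real_roots_of_quarticDisc_pos {p q r s x : ℝ} (hD : 0 < quarticDisc p q r s)
    (hx : x^4 + p*x^3 + q*x^2 + r*x + s = 0) :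
    ∃ a b c d : ℝ, p = -(a + b + c + d) ∧ q = a*b + a*c + a*d + b*c + b*d + c*d ∧
      r = -(a*b*c + a*b*d + a*c*d + b*c*d) ∧ s = a*b*c*d := by
  obtain ⟨y, u, v, rfl, rfl, rfl, rfl⟩ := exists_quadratic_factor_of_quartic_eq_zero hx
  rw [quarticDisc_of_two_roots_mul_quadratic] at hD
  obtain ⟨c, d, rfl, rfl⟩ :=
    exists_roots_of_quadratic_discrim_nonneg (pos_of_mul_pos_left hD (sq_nonneg _)).le
  exact ⟨x, y, c, d, by ring, by ring, by ring, by ring⟩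

theorem quartic_ne_zero_of_quarticDisc_pos {p q r s : ℝ} (hD : 0 < quarticDisc p q r s)
    (h : 3 * p ^ 2 - 8 * q ≤ 0 ∨
      p^2*q^2 - 3*r*p^3 - 6*p^2*s - 4*q^3 + 14*p*q*r + 16*s*q - 18*r^2 ≤ 0)
    (x : ℝ) : x^4 + p*x^3 + q*x^2 + r*x + s ≠ 0 := by
  intro hx
  obtain ⟨a, b, c, d, hp, hq, hr, hs⟩ := exists_four_real_roots_of_quarticDisc_pos hD hx
  have hV : (a - b) * (a - c) * (a - d) * (b - c) * (b - d) * (c - d) ≠ 0 := by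
    rw [hp, hq, hr, hs, quarticDisc_of_roots] at hD
    exact pow_ne_zero_iff two_ne_zero |>.mp hD.ne'
  simp only [mul_ne_zero_iff] at hV
  obtain ⟨⟨⟨⟨⟨hab, hac⟩, -⟩, hbc⟩, -⟩, -⟩ := hV
  have h₁ : 3 * p ^ 2 - 8 * q =
      (a - b)^2 + (a - c)^2 + (a - d)^2 + (b - c)^2 + (b - d)^2 + (c - d)^2 := by
    rw [hp, hq]; ring
  have h₂ : 2 * (p^2*q^2 - 3*r*p^3 - 6*p^2*s - 4*q^3 + 14*p*q*r + 16*s*q - 18*r^2) =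
      ((a - b) * (b - c) * (a - c))^2 + ((a - b) * (b - d) * (a - d))^2 +
        ((a - c) * (c - d) * (a - d))^2 + ((b - c) * (c - d) * (b - d))^2 := by
    rw [hp, hq, hr, hs]; ring
  have hab₂ : 0 < (a - b)^2 := by positivity
  have habc₂ : 0 < ((a - b) * (b - c) * (a - c))^2 := by positivity
  rcases h with h | h
  · linarith [sq_nonneg (a - c), sq_nonneg (a - d), sq_nonneg (b - c),
      sq_nonneg (b - d), sq_nonneg (c - d)]
  · linarith [sq_nonneg ((a - b) * (b - d) * (a - d)), sq_nonneg ((a - c) * (c - d) * (a - d)),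
      sq_nonneg ((b - c) * (c - d) * (b - d))]

theorem Complex.ofReal_quarticDisc (p q r s : ℝ) :
    ((quarticDisc p q r s : ℝ) : ℂ) = quarticDisc (p : ℂ) q r s := by
  unfold quarticDisc; push_cast; ring

noncomputable def conjQuadratic (z : ℂ) : ℝ[X] := X ^ 2 - C (2 * z.re) * X + C (‖z‖ ^ 2)

theorem conjQuadratic_monic (z : ℂ) : (conjQuadratic z).Monic := by
  unfold conjQuadratic; monicity!

theorem conjQuadratic_natDegree (z : ℂ) : (conjQuadratic z).natDegree = 2 := by
  unfold conjQuadratic; compute_degree!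

theorem map_conjQuadratic (z : ℂ) :
    (conjQuadratic z).map (algebraMap ℝ ℂ) = (X - C z) * (X - C (conj z)) := by
  calc (conjQuadratic z).map (algebraMap ℝ ℂ)
    _ = X ^ 2 - C (↑(2 * z.re) : ℂ) * X + C (‖z‖ ^ 2 : ℂ) := by simp [conjQuadratic]
    _ = (X - C z) * (X - C (conj z)) := by
      rw [← Complex.add_conj, map_add, ← Complex.mul_conj', map_mul]
      ring

theorem conjQuadratic_dvd_of_forall_not_isRoot {f : ℝ[X]} (hf : 0 < f.degree)
    (hroot : ∀ x : ℝ, ¬ f.IsRoot x) : ∃ z : ℂ, conjQuadratic z ∣ f := by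
  obtain ⟨z, hz⟩ := IsAlgClosed.exists_aeval_eq_zero ℂ f hf.ne'
  refine ⟨z, f.quadratic_dvd_of_aeval_eq_zero_im_ne_zero hz fun him => hroot z.re ?_⟩
  have hz_re : z = (z.re : ℂ) := Complex.ext rfl (by simp [him])
  rw [hz_re, ← Complex.coe_algebraMap, aeval_algebraMap_apply_eq_algebraMap_eval,
    map_eq_zero] at hz
  exact hz

theorem exists_eq_conjQuadratic_mul {f : ℝ[X]} (hm : f.Monic) (hdeg : f.natDegree = 4)
    (hroot : ∀ x : ℝ, ¬ f.IsRoot x) : ∃ z w : ℂ, f = conjQuadratic z * conjQuadratic w := by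
  obtain ⟨z, g, rfl⟩ := conjQuadratic_dvd_of_forall_not_isRoot (by
    rw [degree_eq_natDegree hm.ne_zero, hdeg]; norm_num) hroot
  have hg : g.Monic := (conjQuadratic_monic z).of_mul_monic_left hm
  have hgdeg : g.natDegree = 2 := by
    rw [(conjQuadratic_monic z).natDegree_mul hg, conjQuadratic_natDegree] at hdeg; omega
  obtain ⟨w, hw⟩ := conjQuadratic_dvd_of_forall_not_isRoot (by
    rw [degree_eq_natDegree hg.ne_zero, hgdeg]; norm_num)
    fun x hx => hroot x (by simp [IsRoot, hx.eq_zero])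
  refine ⟨z, w, congrArg _ (eq_of_monic_of_dvd_of_natDegree_le (conjQuadratic_monic w) hg hw ?_)⟩
  rw [hgdeg, conjQuadratic_natDegree]

open Polynomial in
theorem quartic_no_real_roots (p q r s : ℝ)
    (hD : (18*p^3*r*q*s - 4*q^3*p^2*s + 144*s*r^2*q + q^2*p^2*r^2 - 192*p*r*s^2 + 144*q*p^2*s^2 + 18*p*r^3*q - 4*p^3*r^3 - 128*q^2*s^2 + 16*q^4*s - 4*q^3*r^2 - 27*p^4*s^2 - 80*p*r*q^2*s - 6*p^2*r^2*s + 256*s^3 - 27*r^4) > 0)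
    (h : 3 * p ^ 2 - 8 * q ≤ 0 ∨ (p^2*q^2 - 3*r*p^3 - 6*p^2*s - 4*q^3 + 14*p*q*r + 16*s*q - 18*r^2) ≤ 0) :
    (∀ x : ℝ, x ^ 4 + p * x ^ 3 + q * x ^ 2 + r * x + s ≠ 0) ∧
    ∃ z w : ℂ, z.im ≠ 0 ∧ w.im ≠ 0 ∧ z ≠ w ∧ z ≠ (starRingEnd ℂ) w ∧
      (X ^ 4 + C p * X ^ 3 + C q * X ^ 2 + C r * X + C s : ℝ[X]).map
          (algebraMap ℝ ℂ) =
        (X - C z) * (X - C ((starRingEnd ℂ) z)) * (X - C w) *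
          (X - C ((starRingEnd ℂ) w)) := by
  have hroot := quartic_ne_zero_of_quarticDisc_pos hD h
  obtain ⟨z, w, hfac⟩ := exists_eq_conjQuadratic_mul
    (f := X ^ 4 + C p * X ^ 3 + C q * X ^ 2 + C r * X + C s) (by monicity!) (by compute_degree!)
    fun x hx => hroot x (by simpa using hx)
  have hmap := congrArg (map (algebraMap ℝ ℂ)) hfac
  rw [Polynomial.map_mul, map_conjQuadratic, map_conjQuadratic, ← mul_assoc] at hmap
  have hDC : quarticDisc (p : ℂ) q r s ≠ 0 := by
    rw [← Complex.ofReal_quarticDisc]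
    exact Complex.ofReal_ne_zero.mpr hD.ne'
  have hmapC : X^4 + C (p : ℂ) * X^3 + C (q : ℂ) * X^2 + C (r : ℂ) * X + C (s : ℂ) =
      (X - C z) * (X - C (conj z)) * (X - C w) * (X - C (conj w)) := by
    rw [← hmap]; simp
  rw [quarticDisc_eq_of_eq_prod hmapC] at hDC
  have hV₀ := (pow_ne_zero_iff two_ne_zero).mp hDC
  simp only [mul_ne_zero_iff, sub_ne_zero] at hV₀
  obtain ⟨⟨⟨⟨⟨hz, hzw⟩, hzw'⟩, -⟩, -⟩, hw⟩ := hV₀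
  exact ⟨hroot, z, w, fun h => hz (Complex.conj_eq_iff_im.mpr h).symm,
    fun h => hw (Complex.conj_eq_iff_im.mpr h).symm, hzw, hzw', hmap⟩
end

section
/- Let f(x) = x⁴ + px³ + qx² + rx + s with discriminant D = 0 and D1 = p²q² - 3rp³ - 6p²s - 4q³ + 14pqr + 16sq - 18r² > 0. Then f has exactly one real double root and two distinct real simple roots. -/
/-!
A quartic with vanishing discriminant has a repeated root `α`; when `D1 ≠ 0` this root is unique
and therefore a rational function of the coefficients, `α = N / (2 D1)`. Writing
`f = (X - α)² (X² + u X + v)`, one has `D1 = (u² - 4v) (α² + uα + v)²`, so `D1 > 0` forces the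
quadratic factor to have positive discriminant and not to vanish at `α`: its two roots are real,
distinct, and different from `α`.
-/

namespace Quartic

section CommRing

variable {R : Type*} [CommRing R]

def discr (p q r s : R) : R :=
  18*p^3*r*q*s - 4*q^3*p^2*s + 144*s*r^2*q + q^2*p^2*r^2 - 192*p*r*s^2 + 144*q*p^2*s^2
    + 18*p*r^3*q - 4*p^3*r^3 - 128*q^2*s^2 + 16*q^4*s - 4*q^3*r^2 - 27*p^4*s^2 - 80*p*r*q^2*s
    - 6*p^2*r^2*s + 256*s^3 - 27*r^4

/-- The paper's `D1`. -/
def subdiscr (p q r s : R) : R :=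
  p^2*q^2 - 3*r*p^3 - 6*p^2*s - 4*q^3 + 14*p*q*r + 16*s*q - 18*r^2

def doubleRootNum (p q r s : R) : R :=
  9*p^3*s - p^2*q*r - 32*p*q*s - 3*p*r^2 + 4*q^2*r + 48*r*s

/-- `M³ f'(N / M)`, with `M = 2 D1`, is a multiple of the discriminant. -/
theorem deriv_homogenized_doubleRootNum (p q r s : R) :
    let N := doubleRootNum p q r s
    let M := 2 * subdiscr p q r s
    4*N^3 + 3*p*N^2*M + 2*q*N*M^2 + r*M^3 =
      (54*p^6*r - 18*p^5*q^2 - 432*p^4*q*r + 136*p^3*q^3 + 648*p^3*r^2 + 720*p^2*q^2*r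
        - 256*p*q^4 - 2592*p*q*r^2 + 512*q^3*r + 1728*r^3) * discr p q r s := by
  simp only [doubleRootNum, subdiscr, discr]
  ring

/-- `M⁴ f(N / M)`, with `M = 2 D1`, is a multiple of the discriminant. -/
theorem eval_homogenized_doubleRootNum (p q r s : R) :
    let N := doubleRootNum p q r s
    let M := 2 * subdiscr p q r s
    N^4 + p*N^3*M + q*N^2*M^2 + r*N*M^3 + s*M^4 =
      (162*p^9*r*s - 54*p^8*q^2*s - 54*p^8*q*r^2 + 81*p^8*s^2 + 30*p^7*q^3*r - 1998*p^7*q*r*s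
        - 162*p^7*r^3 - 4*p^6*q^5 + 636*p^6*q^3*s + 783*p^6*q^2*r^2 - 864*p^6*q*s^2
        + 2106*p^6*r^2*s - 384*p^5*q^4*r + 8208*p^5*q^2*r*s + 810*p^5*q*r^3 + 48*p^4*q^6
        - 2640*p^4*q^4*s - 3540*p^4*q^3*r^2 + 3456*p^4*q^2*s^2 - 16848*p^4*q*r^2*s
        - 1863*p^4*r^4 + 1632*p^3*q^5*r - 11520*p^3*q^3*r*s + 2592*p^3*q^2*r^3
        + 10368*p^3*r^3*s - 192*p^2*q^7 + 4352*p^2*q^5*s + 4384*p^2*q^4*r^2 - 6144*p^2*q^3*s^2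
        + 34560*p^2*q^2*r^2*s + 6480*p^2*q*r^4 - 2304*p*q^6*r + 1024*p*q^4*r*s
        - 13056*p*q^3*r^3 - 41472*p*q*r^3*s - 5184*p*r^5 + 256*q^8 - 2048*q^6*s
        + 2816*q^5*r^2 + 4096*q^4*s^2 - 3072*q^3*r^2*s + 6912*q^2*r^4 + 20736*r^4*s)
        * discr p q r s := by
  simp only [doubleRootNum, subdiscr, discr]
  ring

/-- The coefficients of `(X - α)² (X² + u X + v)` are
`u - 2α`, `v - 2αu + α²`, `α²u - 2αv`, `α²v`. -/
theorem subdiscr_sq_mul_quadratic (α u v : R) :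
    subdiscr (u - 2*α) (v - 2*α*u + α^2) (α^2*u - 2*α*v) (α^2*v) =
      (u^2 - 4*v) * (α^2 + u*α + v)^2 := by
  simp only [subdiscr]
  ring

end CommRing

section Field

variable {K : Type*} [Field K] [NeZero (2 : K)] {p q r s : K}

noncomputable def doubleRoot (p q r s : K) : K :=
  doubleRootNum p q r s / (2 * subdiscr p q r s)

theorem doubleRoot_isDoubleRoot (hD : discr p q r s = 0) (h : subdiscr p q r s ≠ 0) :
    let α := doubleRoot p q r s
    α^4 + p*α^3 + q*α^2 + r*α + s = 0 ∧ 4*α^3 + 3*p*α^2 + 2*q*α + r = 0 := by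
  have hM : 2 * subdiscr p q r s ≠ 0 := mul_ne_zero two_ne_zero h
  have hf := eval_homogenized_doubleRootNum p q r s
  have hf' := deriv_homogenized_doubleRootNum p q r s
  simp only [hD, mul_zero] at hf hf'
  simp only [doubleRoot]
  constructor
  · field_simp
    linear_combination hf
  · field_simp
    linear_combination hf'

theorem exists_eq_sq_mul_quadratic_coeffs (hD : discr p q r s = 0) (h : subdiscr p q r s ≠ 0) :
    ∃ α u v : K, p = u - 2*α ∧ q = v - 2*α*u + α^2 ∧ r = α^2*u - 2*α*v ∧ s = α^2*v := by
  obtain ⟨hf, hf'⟩ := doubleRoot_isDoubleRoot hD h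
  set α := doubleRoot p q r s
  refine ⟨α, p + 2*α, q + 2*p*α + 3*α^2, by ring, by ring, ?_, ?_⟩
  · linear_combination hf'
  · linear_combination hf - α * hf'

end Field

theorem exists_ne_roots_of_sq_sub_pos {u v : ℝ} (h : 0 < u^2 - 4*v) :
    ∃ a b : ℝ, a ≠ b ∧ u = -(a + b) ∧ v = a * b := by
  set t := √(u^2 - 4*v)
  have ht : t^2 = u^2 - 4*v := Real.sq_sqrt h.le
  refine ⟨(-u + t)/2, (-u - t)/2, ?_, by ring, by linear_combination (1/4 : ℝ) * ht⟩
  have ht0 : 0 < t := Real.sqrt_pos.mpr h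
  intro hab
  linarith

end Quartic

open Polynomial in
theorem quartic_double_and_two_real_simple (p q r s : ℝ)
    (hD : (18*p^3*r*q*s - 4*q^3*p^2*s + 144*s*r^2*q + q^2*p^2*r^2 - 192*p*r*s^2 + 144*q*p^2*s^2 + 18*p*r^3*q - 4*p^3*r^3 - 128*q^2*s^2 + 16*q^4*s - 4*q^3*r^2 - 27*p^4*s^2 - 80*p*r*q^2*s - 6*p^2*r^2*s + 256*s^3 - 27*r^4) = 0)
    (hD1 : (p^2*q^2 - 3*r*p^3 - 6*p^2*s - 4*q^3 + 14*p*q*r + 16*s*q - 18*r^2) > 0) :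
    ∃ α a b : ℝ, α ≠ a ∧ α ≠ b ∧ a ≠ b ∧
      (X ^ 4 + C p * X ^ 3 + C q * X ^ 2 + C r * X + C s : ℝ[X]) =
        (X - C α) ^ 2 * (X - C a) * (X - C b) := by
  change 0 < Quartic.subdiscr p q r s at hD1
  obtain ⟨α, u, v, rfl, rfl, rfl, rfl⟩ :=
    Quartic.exists_eq_sq_mul_quadratic_coeffs hD hD1.ne'
  rw [Quartic.subdiscr_sq_mul_quadratic] at hD1
  have hdiscrim : 0 < u^2 - 4*v := pos_of_mul_pos_left hD1 (sq_nonneg _)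
  have hα : α^2 + u*α + v ≠ 0 := fun h ↦ by simp [h] at hD1
  obtain ⟨a, b, hab, rfl, rfl⟩ := Quartic.exists_ne_roots_of_sq_sub_pos hdiscrim
  have hαab : (α - a) * (α - b) ≠ 0 := by convert hα using 1; ring
  refine ⟨α, a, b, sub_ne_zero.mp (left_ne_zero_of_mul hαab),
    sub_ne_zero.mp (right_ne_zero_of_mul hαab), hab, ?_⟩
  simp only [map_sub, map_add, map_mul, map_neg, map_pow, map_ofNat]
  ring
end

section
/- Let f(x) = x⁴ + px³ + qx² + rx + s with D = 0, D1 = 0, 3p² - 8q > 0, and p³ - 4pq + 8r = 0. Then f has two distinct real double roots. -/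
/-!
The condition `p³ - 4pq + 8r = 0` says that the shift `x = y - p/4` removes the linear term
together with the cubic one, so `f` becomes the biquadratic `y⁴ + a y² + b` with
`a = (8q - 3p²)/8 < 0`. Under that condition `-32 D1` factors as `(3p² - 8q)(64s - (4q - p²)²)`,
so `D1 = 0` forces `b = a²/4`, i.e. `f = (y² - t²)²` with `t² = (3p² - 8q)/16 > 0`,
whose double roots `y = ±t` are real and distinct.
-/

open Polynomial

theorem sixtyFour_mul_eq_sq_of_D1_eq_zero {R : Type*} [CommRing R] [NoZeroDivisors R]
    {p q r s : R} (hp : p ^ 3 - 4 * p * q + 8 * r = 0)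
    (hD1 : p^2*q^2 - 3*r*p^3 - 6*p^2*s - 4*q^3 + 14*p*q*r + 16*s*q - 18*r^2 = 0)
    (hpq : 3 * p ^ 2 - 8 * q ≠ 0) :
    64 * s = (4 * q - p ^ 2) ^ 2 := by
  have hfactor : (3 * p ^ 2 - 8 * q) * (64 * s - (4 * q - p ^ 2) ^ 2) = 0 := by
    linear_combination (-32) * hD1 + (-3 * p ^ 3 + 20 * p * q - 72 * r) * hp
  exact sub_eq_zero.mp ((mul_eq_zero.mp hfactor).resolve_left hpq)

theorem quartic_eq_X_sub_C_sq_mul_X_sub_C_sq {R : Type*} [CommRing R] {p q r s c t : R}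
    (hp : p = -4 * c) (hq : q = 6 * c ^ 2 - 2 * t ^ 2) (hr : r = 4 * c * (t ^ 2 - c ^ 2))
    (hs : s = (c ^ 2 - t ^ 2) ^ 2) :
    (X ^ 4 + C p * X ^ 3 + C q * X ^ 2 + C r * X + C s : R[X]) =
      (X - C (c + t)) ^ 2 * (X - C (c - t)) ^ 2 := by
  subst hp hq hr hs
  simp only [map_add, map_sub, map_mul, map_neg, map_pow, map_ofNat]
  ring

theorem quartic_two_real_double_roots_general (p q r s : ℝ)
    (hD1 : (p^2*q^2 - 3*r*p^3 - 6*p^2*s - 4*q^3 + 14*p*q*r + 16*s*q - 18*r^2) = 0)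
    (hpq : 3 * p ^ 2 - 8 * q > 0)
    (hp : p ^ 3 - 4 * p * q + 8 * r = 0) :
    ∃ α β : ℝ, α ≠ β ∧
      (X ^ 4 + C p * X ^ 3 + C q * X ^ 2 + C r * X + C s : ℝ[X]) =
        (X - C α) ^ 2 * (X - C β) ^ 2 := by
  have hs := sixtyFour_mul_eq_sq_of_D1_eq_zero hp hD1 hpq.ne'
  obtain ⟨t, ht, ht2⟩ : ∃ t : ℝ, 0 < t ∧ t ^ 2 = (3 * p ^ 2 - 8 * q) / 16 :=
    ⟨√((3 * p ^ 2 - 8 * q) / 16), Real.sqrt_pos.mpr (by positivity), Real.sq_sqrt (by positivity)⟩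
  refine ⟨-p / 4 + t, -p / 4 - t, by linarith, quartic_eq_X_sub_C_sq_mul_X_sub_C_sq ?_ ?_ ?_ ?_⟩
  · ring
  · linear_combination 2 * ht2
  · linear_combination hp / 8 + p * ht2
  · linear_combination hs / 64 + (p ^ 2 / 16 - t ^ 2 + (4 * q - p ^ 2) / 8) * ht2

open Polynomial in
theorem quartic_two_real_double_roots (p q r s : ℝ)
    (hD : (18*p^3*r*q*s - 4*q^3*p^2*s + 144*s*r^2*q + q^2*p^2*r^2 - 192*p*r*s^2 + 144*q*p^2*s^2 + 18*p*r^3*q - 4*p^3*r^3 - 128*q^2*s^2 + 16*q^4*s - 4*q^3*r^2 - 27*p^4*s^2 - 80*p*r*q^2*s - 6*p^2*r^2*s + 256*s^3 - 27*r^4) = 0)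
    (hD1 : (p^2*q^2 - 3*r*p^3 - 6*p^2*s - 4*q^3 + 14*p*q*r + 16*s*q - 18*r^2) = 0)
    (hpq : 3 * p ^ 2 - 8 * q > 0)
    (hp : p ^ 3 - 4 * p * q + 8 * r = 0) :
    ∃ α β : ℝ, α ≠ β ∧
      (X ^ 4 + C p * X ^ 3 + C q * X ^ 2 + C r * X + C s : ℝ[X]) =
        (X - C α) ^ 2 * (X - C β) ^ 2 :=
  quartic_two_real_double_roots_general p q r s hD1 hpq hp
end
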